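/- arXiv:2203.06230 — 5 statements merged into one kernel-verified Lean document; each statement's English description precedes it below -/
import Mathlib

section
/- In any automorphic loop Q, for all x, y in Q, the identity (xy)^2 = (x · (y)R⁻¹_{x⁻¹}) · y holds, where R_a denotes right translation by a. -/
/-- A loop: a set with a binary operation, a two-sided identity, and
unique left and right division (left and right translations are bijective). -/
class Loop (Q : Type*) extends Mul Q, One Q where
  one_mul : ∀ x : Q, 1 * x = x
  mul_one : ∀ x : Q, x * 1 = x
  lmul_bij : ∀ a : Q, Function.Bijective (fun x : Q => a * x)
  rmul_bij : ∀ a : Q, Function.Bijective (fun x : Q => x * a)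

namespace Loop

variable {Q : Type*} [Loop Q]

/-- Left translation `L_a : x ↦ a * x` as a bijection. -/
noncomputable def Lt (a : Q) : Q ≃ Q :=
  Equiv.ofBijective (fun x : Q => a * x) (Loop.lmul_bij a)

/-- Right translation `R_a : x ↦ x * a` as a bijection. -/
noncomputable def Rt (a : Q) : Q ≃ Q :=
  Equiv.ofBijective (fun x : Q => x * a) (Loop.rmul_bij a)

@[simp] theorem Lt_apply (a x : Q) : Lt a x = a * x := rfl
@[simp] theorem Rt_apply (a x : Q) : Rt a x = x * a := rfl

/-- The conjugation inner mapping `T_x = R_x L_x⁻¹` (right-action convention: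
`(y)T_x` is the unique `z` with `x*z = y*x`). -/
noncomputable def Tt (a : Q) : Q ≃ Q := (Rt a).trans (Lt a).symm

/-- The inner mapping `R_{(x,y)} = R_x R_y R_{xy}⁻¹` (right-action convention). -/
noncomputable def Rinner (x y : Q) : Q ≃ Q :=
  (Rt x).trans ((Rt y).trans (Rt (x * y)).symm)

/-- The inner mapping `L_{(x,y)} = L_x L_y L_{yx}⁻¹` (right-action convention). -/
noncomputable def Linner (x y : Q) : Q ≃ Q :=
  (Lt x).trans ((Lt y).trans (Lt (y * x)).symm)

/-- A bijection of a loop is multiplicative (an automorphism). -/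
def IsAut (f : Q ≃ Q) : Prop := ∀ a b : Q, f (a * b) = f a * f b

end Loop

open Loop

/-- An automorphic loop: a loop in which all inner mappings are automorphisms.
Since the inner mapping group is generated by the mappings `R_{(x,y)}`,
`L_{(x,y)}` and `T_x`, it suffices that these generators are automorphisms.
Automorphic loops are power associative, so every element has a two-sided
inverse, which we record in the structure. -/
class AutomorphicLoop (Q : Type*) extends Loop Q, Inv Q where
  mul_inv : ∀ x : Q, x * x⁻¹ = 1
  inv_mul : ∀ x : Q, x⁻¹ * x = 1
  Rinner_isAut : ∀ x y : Q, IsAut (Rinner x y)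
  Linner_isAut : ∀ x y : Q, IsAut (Linner x y)
  T_isAut : ∀ x : Q, IsAut (Tt x)


section Proof

variable {Q : Type*} [AutomorphicLoop Q]

open AutomorphicLoop

private lemma lcancel {a b c : Q} (h : a * b = a * c) : b = c :=
  (Loop.lmul_bij a).1 h

private lemma rcancel {a b c : Q} (h : b * a = c * a) : b = c :=
  (Loop.rmul_bij a).1 h

private lemma Lt_symm_mul (a b : Q) : (Lt a).symm (a * b) = b :=
  (Lt a).symm_apply_apply b

private lemma mul_Lt_symm (a b : Q) : a * (Lt a).symm b = b :=
  (Lt a).apply_symm_apply b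

private lemma inv_eq_of_mul {a b : Q} (h : a * b = 1) : b = a⁻¹ :=
  lcancel (h.trans (mul_inv a).symm)

private lemma my_inv_inv (a : Q) : a⁻¹⁻¹ = a :=
  (inv_eq_of_mul (inv_mul a)).symm

private lemma aut_one {f : Q ≃ Q} (hf : IsAut f) : f 1 = 1 := by
  have h : f 1 * 1 = f 1 * f 1 := by
    rw [Loop.mul_one]; rw [← hf 1 1, Loop.one_mul]
  exact (lcancel h).symm

private lemma aut_inv {f : Q ≃ Q} (hf : IsAut f) (a : Q) : f a⁻¹ = (f a)⁻¹ := by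
  apply inv_eq_of_mul
  rw [← hf a a⁻¹, AutomorphicLoop.mul_inv, aut_one hf]

private lemma Tt_apply' (a c : Q) : Tt a c = (Lt a).symm (c * a) := rfl

private lemma mul_Tt (a c : Q) : a * Tt a c = c * a := by
  rw [Tt_apply', mul_Lt_symm]

private lemma Tt_self (a : Q) : Tt a a = a := by
  apply lcancel (a := a); rw [mul_Tt]

/-- Flexibility: automorphic loops satisfy `(a*b)*a = a*(b*a)`. -/
private lemma flex (a b : Q) : (a * b) * a = a * (b * a) := by
  have h := T_isAut a a b
  rw [Tt_self] at h
  calc (a * b) * a = a * Tt a (a * b) := (mul_Tt a (a*b)).symm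
    _ = a * (a * Tt a b) := by rw [h]
    _ = a * (b * a) := by rw [mul_Tt]

private lemma Linner_apply' (a b c : Q) :
    Linner a b c = (Lt (b * a)).symm (b * (a * c)) := rfl

/-- `(a*b) * ((a*b)\a)⁻¹ = a*(b*b)`. -/
private lemma lemB (a b : Q) :
    (a * b) * ((Lt (a * b)).symm a)⁻¹ = a * (b * b) := by
  set g := Linner b a with hg
  have hgaut := Linner_isAut b a
  have hgbinv : g b⁻¹ = (Lt (a * b)).symm a := by
    rw [hg, Linner_apply', AutomorphicLoop.mul_inv, Loop.mul_one]
  have hgb : g b = ((Lt (a * b)).symm a)⁻¹ := by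
    rw [← hgbinv]
    apply inv_eq_of_mul
    rw [← hgaut b⁻¹ b, inv_mul, aut_one hgaut]
  have : (a * b) * g b = a * (b * b) := by
    rw [hg, Linner_apply', mul_Lt_symm]
  rw [← hgb, this]

theorem aux_stmt0 {Q : Type*} [AutomorphicLoop Q] (x y : Q) :
    (x * y) * (x * y) = (x * (Rt x⁻¹).symm y) * y := by
  set s := (Rt x⁻¹).symm y with hsdef
  have hs : s * x⁻¹ = y := (Rt x⁻¹).apply_symm_apply y
  set u := Tt y x with hu
  set v := Tt y s with hv
  have hyu : y * u = x * y := mul_Tt y x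
  have hyv : y * v = s * y := mul_Tt y s
  -- v * u⁻¹ = y
  have hvu : v * u⁻¹ = y := by
    have h := T_isAut y s x⁻¹
    rw [hs, Tt_self, aut_inv (T_isAut y) x] at h
    exact h.symm
  -- (x*s)*y = y*(u*v)
  have h1 : (x * s) * y = y * (u * v) := by
    rw [← mul_Tt y (x * s), T_isAut y x s, ← hu, ← hv]
  -- the inner mapping g = L_{(u,y)}
  set g := Linner u y with hgdef
  have hgaut := Linner_isAut u y
  have hgu : g u = ((Lt (y * u)).symm y)⁻¹ := by
    rw [hgdef, Linner_apply', ← lemB y u, Lt_symm_mul]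
  have hguinv : g u⁻¹ = (Lt (y * u)).symm y := by
    rw [aut_inv hgaut, hgu, my_inv_inv]
  have hgy : g y = y := by
    rw [hgdef, Linner_apply', ← flex, Lt_symm_mul]
  have hgv : g v = y * u := by
    apply rcancel (a := g u⁻¹)
    have h2 : g v * g u⁻¹ = g y := by rw [← hgaut v u⁻¹, hvu]
    rw [h2, hgy, hguinv, mul_Lt_symm]
  have h3 : y * (u * v) = (y * u) * g v := by
    rw [hgdef, Linner_apply', mul_Lt_symm]
  rw [h1, h3, hgv, hyu]

end Proof

theorem stmt0 {Q : Type*} [AutomorphicLoop Q] (x y : Q) :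
    (x * y) * (x * y) = (x * (Rt x⁻¹).symm y) * y := aux_stmt0 x y
end

section
/- In any automorphic loop Q, for all x, y in Q, the identity (x y x⁻¹)² = (xy)(yx⁻¹) holds (where x y x⁻¹ is unambiguous since (x^m y)x^n = x^m(y x^n) holds in automorphic loops). -/
open Loop

namespace ALProof

open AutomorphicLoop

variable {Q : Type*} [AutomorphicLoop Q]

lemma minv (x : Q) : x * x⁻¹ = 1 := AutomorphicLoop.mul_inv x

lemma imul (x : Q) : x⁻¹ * x = 1 := AutomorphicLoop.inv_mul x

lemma lcancel {a b c : Q} (h : a * b = a * c) : b = c := (Loop.lmul_bij a).1 h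

lemma rcancel {a b c : Q} (h : b * a = c * a) : b = c := (Loop.rmul_bij a).1 h

lemma mul_Tt (x a : Q) : x * (Tt x a) = a * x := (Lt x).apply_symm_apply (a * x)

lemma Linner_eq (x y c : Q) : (y * x) * (Linner x y c) = y * (x * c) :=
  (Lt (y * x)).apply_symm_apply (y * (x * c))

lemma Rinner_eq (x y c : Q) : (Rinner x y c) * (x * y) = (c * x) * y :=
  (Rt (x * y)).apply_symm_apply ((c * x) * y)

lemma aut_one {f : Q ≃ Q} (hf : IsAut f) : f 1 = 1 := by
  have h := hf 1 1
  rw [Loop.mul_one] at h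
  have h' : f 1 * f 1 = f 1 * 1 := by rw [Loop.mul_one]; exact h.symm
  exact lcancel h'

lemma aut_inv {f : Q ≃ Q} (hf : IsAut f) (a : Q) : f a⁻¹ = (f a)⁻¹ := by
  apply lcancel (a := f a)
  rw [← hf a a⁻¹, minv, aut_one hf, minv]

lemma inv_inj {a b : Q} (h : a⁻¹ = b⁻¹) : a = b := by
  apply rcancel (a := a⁻¹)
  rw [minv, h, minv]

lemma Linner_inv_apply (x c : Q) : Linner x x⁻¹ c = x⁻¹ * (x * c) := by
  have h := Linner_eq x x⁻¹ c
  rwa [imul, Loop.one_mul] at h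

lemma theta_inv (x : Q) : Linner x x⁻¹ x⁻¹ = x⁻¹ := by
  rw [Linner_inv_apply, minv, Loop.mul_one]

/-- `L_x` and `L_{x⁻¹}` commute. -/
lemma LL (x b : Q) : x * (x⁻¹ * b) = x⁻¹ * (x * b) := by
  have h := (Linner_isAut x x⁻¹) x⁻¹ b
  simp only [Linner_inv_apply] at h
  rw [minv, Loop.mul_one] at h
  exact lcancel h

lemma Tt_inv_self (g : Q) : Tt g⁻¹ g = g := by
  apply lcancel (a := g⁻¹)
  rw [mul_Tt, minv, imul]

/-- `(g*c)*g⁻¹ = g*(c*g⁻¹)`. -/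
lemma F2 (g c : Q) : (g * c) * g⁻¹ = g * (c * g⁻¹) := by
  have h := (T_isAut g⁻¹) g c
  rw [Tt_inv_self] at h
  calc (g * c) * g⁻¹ = g⁻¹ * Tt g⁻¹ (g * c) := (mul_Tt g⁻¹ (g * c)).symm
    _ = g⁻¹ * (g * Tt g⁻¹ c) := by rw [h]
    _ = g * (g⁻¹ * Tt g⁻¹ c) := (LL g (Tt g⁻¹ c)).symm
    _ = g * (c * g⁻¹) := by rw [mul_Tt]

/-- Antiautomorphic inverse property. -/
lemma aaip (a b : Q) : (b * a)⁻¹ = a⁻¹ * b⁻¹ := by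
  have hac : a * ((Lt a).symm b⁻¹) = b⁻¹ := (Lt a).apply_symm_apply b⁻¹
  set c := (Lt a).symm b⁻¹ with hcdef
  have hu1 : (b * a) * (Linner a b a⁻¹) = b := by
    have h := Linner_eq a b a⁻¹
    rwa [minv, Loop.mul_one] at h
  have hLc : Linner a b c = (b * a)⁻¹ := by
    apply lcancel (a := b * a)
    rw [Linner_eq, hac, minv, minv]
  have hmul := (Linner_isAut a b) a⁻¹ c
  have e1 : (b * a) * (Linner a b (a⁻¹ * c)) = b * (a⁻¹ * b⁻¹) := by
    rw [Linner_eq, LL, hac]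
  have e2 : (b * a) * (Linner a b (a⁻¹ * c)) = b * (b * a)⁻¹ := by
    rw [hmul, hLc, ← F2, hu1]
  have : b * (a⁻¹ * b⁻¹) = b * (b * a)⁻¹ := e1.symm.trans e2
  exact (lcancel this).symm

/-- If `z*x = x*y` then `y*x⁻¹ = x⁻¹*z`. -/
lemma swap_inv (x y z : Q) (h : z * x = x * y) : y * x⁻¹ = x⁻¹ * z := by
  have h1 : x⁻¹ * z⁻¹ = y⁻¹ * x⁻¹ := by
    have h0 := congrArg (fun t : Q => t⁻¹) h
    rwa [aaip, aaip] at h0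
  have h2 : x⁻¹ * (Tt x⁻¹ y⁻¹) = x⁻¹ * z⁻¹ := by
    rw [mul_Tt]; exact h1.symm
  have h3 : Tt x⁻¹ y⁻¹ = z⁻¹ := lcancel h2
  have h4 : (Tt x⁻¹ y)⁻¹ = z⁻¹ := by rw [← aut_inv (T_isAut x⁻¹) y]; exact h3
  have h5 : Tt x⁻¹ y = z := inv_inj h4
  rw [← h5, mul_Tt]

/-- Flexibility. -/
lemma flex (m x : Q) : (m * x) * m = m * (x * m) := by
  have hm : Tt m m = m := by
    apply lcancel (a := m)
    rw [mul_Tt]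
  have h := (T_isAut m) m x
  rw [hm] at h
  calc (m * x) * m = m * Tt m (m * x) := (mul_Tt m (m * x)).symm
    _ = m * (m * Tt m x) := by rw [h]
    _ = m * (x * m) := by rw [mul_Tt]

/-- Key square identity: `(x*(x⁻¹*z))² = (z*x)*(x⁻¹*z)`. -/
lemma keyB (x z : Q) :
    (x * (x⁻¹ * z)) * (x * (x⁻¹ * z)) = (z * x) * (x⁻¹ * z) := by
  set m := x⁻¹ * z with hm
  have hωm : Rinner x m m = m := by
    apply rcancel (a := x * m)
    rw [Rinner_eq]
    exact flex m x
  have hωx : Rinner x m x⁻¹ * (x * m) = m := by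
    rw [Rinner_eq, imul, Loop.one_mul]
  have hmul := (Rinner_isAut x m) x⁻¹ z
  rw [← hm, hωm] at hmul
  have hz : Rinner x m z = x * m := by
    apply lcancel (a := Rinner x m x⁻¹)
    rw [← hmul]
    exact hωx.symm
  calc (x * m) * (x * m) = Rinner x m z * (x * m) := by rw [hz]
    _ = (z * x) * m := Rinner_eq x m z

end ALProof

open ALProof in
theorem stmt1 {Q : Type*} [AutomorphicLoop Q] (x y : Q) :
    ((x * y) * x⁻¹) * ((x * y) * x⁻¹) = (x * y) * (y * x⁻¹) := by
  obtain ⟨z, hzx⟩ : ∃ z : Q, z * x = x * y :=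
    ⟨(Rt x).symm (x * y), (Rt x).apply_symm_apply (x * y)⟩
  have hm : y * x⁻¹ = x⁻¹ * z := swap_inv x y z hzx
  have hd : (x * y) * x⁻¹ = x * (y * x⁻¹) := F2 x y
  rw [hd, hm, keyB x z, hzx]
end

section
/- In any automorphic loop Q, for all x, y in Q, the identity (yx)x⁻¹ = x⁻¹(xy) holds. -/
open Loop

theorem stmt2 {Q : Type*} [AutomorphicLoop Q] (x y : Q) :
    (y * x) * x⁻¹ = x⁻¹ * (x * y) := by
  have hl : ∀ a b c : Q, a * b = a * c → b = c := fun a _ _ h => (Loop.lmul_bij a).1 h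
  have hr : ∀ a b c : Q, b * a = c * a → b = c := fun a _ _ h => (Loop.rmul_bij a).1 h
  have hT : ∀ u v : Q, u * Tt u v = v * u := fun u v => (Lt u).apply_symm_apply (v * u)
  have hRi : ∀ u v a : Q, Rinner u v a * (u * v) = (a * u) * v :=
    fun u v a => (Rt (u * v)).apply_symm_apply ((a * u) * v)
  have hTuu : ∀ u : Q, Tt u u = u := by
    intro u
    apply hl u
    rw [hT]
  -- Step 1 : (y*x)*y = y*(x*y)
  have h1 : (y * x) * y = y * (x * y) := by
    have ha := AutomorphicLoop.T_isAut y y x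
    rw [hTuu y, hT y x] at ha
    have hb := hT y (y * x)
    rw [ha] at hb
    exact hb.symm
  -- Step 2 : ((x*y)*x⁻¹)*(x*y) = (x*y)*(x⁻¹*(x*y))
  have h2 : ((x * y) * x⁻¹) * (x * y) = (x * y) * (x⁻¹ * (x * y)) := by
    have ha := AutomorphicLoop.T_isAut (x * y) (x * y) x⁻¹
    rw [hTuu (x * y), hT (x * y) x⁻¹] at ha
    have hb := hT (x * y) ((x * y) * x⁻¹)
    rw [ha] at hb
    exact hb.symm
  -- φ := Rinner x⁻¹ (x*y), so φ a * (x⁻¹*(x*y)) = (a*x⁻¹)*(x*y)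
  have h3 : Rinner x⁻¹ (x * y) x * (x⁻¹ * (x * y)) = x * y := by
    have h := hRi x⁻¹ (x * y) x
    rw [AutomorphicLoop.mul_inv x, Loop.one_mul] at h
    exact h
  have h4 : Rinner x⁻¹ (x * y) (x * y) = x * y := by
    apply hr (x⁻¹ * (x * y))
    rw [hRi]
    exact h2
  have h5 : Rinner x⁻¹ (x * y) y = x⁻¹ * (x * y) := by
    have ha := AutomorphicLoop.Rinner_isAut x⁻¹ (x * y) x y
    rw [h4] at ha
    apply hl (Rinner x⁻¹ (x * y) x)
    rw [← ha, h3]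
  have h6 : Rinner x⁻¹ (x * y) ((y * x) * y) = (x⁻¹ * (x * y)) * (x * y) := by
    have ha := AutomorphicLoop.Rinner_isAut x⁻¹ (x * y) y (x * y)
    rw [h4, h5, ← h1] at ha
    exact ha
  have h7 := AutomorphicLoop.Rinner_isAut x⁻¹ (x * y) (y * x) y
  rw [h6, h5, hRi x⁻¹ (x * y) (y * x)] at h7
  exact hr (x * y) _ _ h7.symm
end

section
/- Let L, L' be loops and f: L → L' a half-isomorphism. The following are equivalent: (a) f⁻¹ is also a half-isomorphism; (b) {f(xy), f(yx)} = {f(x)f(y), f(y)f(x)} for all x, y; (c) whenever xy = yx in L, f(x)f(y) = f(y)f(x) in L'. -/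
open Loop

theorem stmt13 {L L' : Type*} [Loop L] [Loop L'] (f : L ≃ L')
    (hhalf : ∀ x y : L, f (x * y) = f x * f y ∨ f (x * y) = f y * f x) :
    ((∀ u v : L', f.symm (u * v) = f.symm u * f.symm v ∨
        f.symm (u * v) = f.symm v * f.symm u) ↔
      (∀ x y : L, ({f (x * y), f (y * x)} : Set L') = {f x * f y, f y * f x})) ∧
    ((∀ x y : L, ({f (x * y), f (y * x)} : Set L') = {f x * f y, f y * f x}) ↔
      (∀ x y : L, x * y = y * x → f x * f y = f y * f x)) := by
  constructor
  · constructor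
    · intro ha x y
      ext z
      simp only [Set.mem_insert_iff, Set.mem_singleton_iff]
      constructor
      · rintro (rfl | rfl)
        · exact hhalf x y
        · rcases hhalf y x with h | h
          · right; exact h
          · left; exact h
      · rintro (rfl | rfl)
        · rcases ha (f x) (f y) with h | h
          · simp only [Equiv.symm_apply_apply] at h
            left; exact (f.symm_apply_eq.mp h).symm ▸ rfl
          · simp only [Equiv.symm_apply_apply] at h
            right; exact (f.symm_apply_eq.mp h).symm ▸ rfl
        · rcases ha (f y) (f x) with h | h
          · simp only [Equiv.symm_apply_apply] at h
            right; exact (f.symm_apply_eq.mp h).symm ▸ rfl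
          · simp only [Equiv.symm_apply_apply] at h
            left; exact (f.symm_apply_eq.mp h).symm ▸ rfl
    · intro hb u v
      have h := hb (f.symm u) (f.symm v)
      have hm : u * v ∈ ({f (f.symm u * f.symm v), f (f.symm v * f.symm u)} : Set L') := by
        rw [h]
        simp
      simp only [Set.mem_insert_iff, Set.mem_singleton_iff] at hm
      rcases hm with h1 | h1
      · left; rw [h1, Equiv.symm_apply_apply]
      · right; rw [h1, Equiv.symm_apply_apply]
  · constructor
    · intro hb x y hxy
      have h := hb x y
      rw [hxy] at h
      have h1 : f x * f y ∈ ({f (y * x), f (y * x)} : Set L') := by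
        rw [h]; simp
      have h2 : f y * f x ∈ ({f (y * x), f (y * x)} : Set L') := by
        rw [h]; simp
      simp only [Set.mem_insert_iff, Set.mem_singleton_iff, or_self] at h1 h2
      rw [h1, h2]
    · intro hc x y
      by_cases hcomm : f x * f y = f y * f x
      · have h1 : f (x * y) = f x * f y := by
          rcases hhalf x y with h | h
          · exact h
          · rw [h, hcomm]
        have h2 : f (y * x) = f x * f y := by
          rcases hhalf y x with h | h
          · rw [h, hcomm]
          · exact h
        rw [h1, h2, hcomm]
      · have hne : x * y ≠ y * x := by
          intro he
          exact hcomm (hc x y he)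
      -- f (x*y) ≠ f (y*x)
        have hfne : f (x * y) ≠ f (y * x) := fun he => hne (f.injective he)
        ext z
        simp only [Set.mem_insert_iff, Set.mem_singleton_iff]
        constructor
        · rintro (rfl | rfl)
          · exact hhalf x y
          · rcases hhalf y x with h | h
            · right; exact h
            · left; exact h
        · rintro (rfl | rfl)
          · rcases hhalf x y with h | h
            · left; exact h.symm
            · rcases hhalf y x with h' | h'
              · exact absurd (h.trans h'.symm) hfne
              · right; exact h'.symm
          · rcases hhalf x y with h | h
            · rcases hhalf y x with h' | h'
              · right; exact h'.symm
              · exact absurd (h.trans h'.symm) hfne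
            · left; exact h.symm
end

section
/- Let Q₁ and Q₂ be automorphic loops and φ: Q₁ → Q₂ a special half-isomorphism. If there is no triple (x, y, z) with φ(xy) = φ(x)φ(y) ≠ φ(y)φ(x) and φ(xz) = φ(z)φ(x) ≠ φ(x)φ(z), then φ is either an isomorphism or an anti-isomorphism. -/
open Loop

section Aux

variable {Q : Type*} [AutomorphicLoop Q]

lemma Tt_mul_eq (a x : Q) : a * Tt a x = x * a :=
  (Lt a).apply_symm_apply (x * a)

lemma Tt_fix {a x : Q} (h : a * x = x * a) : Tt a x = x := by
  apply (Loop.lmul_bij a).1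
  show a * Tt a x = a * x
  rw [Tt_mul_eq, h]

lemma comm_of_Tt_fix {a x : Q} (h : Tt a x = x) : a * x = x * a := by
  conv_lhs => rw [← h]
  rw [Tt_mul_eq]

lemma comm_cancel_left {z x y : Q} (h1 : z * x = x * z)
    (h2 : z * (x * y) = (x * y) * z) : z * y = y * z := by
  have hT := AutomorphicLoop.T_isAut z x y
  rw [Tt_fix h2, Tt_fix h1] at hT
  have : Tt z y = y := by
    apply (Loop.lmul_bij x).1
    exact hT.symm
  exact comm_of_Tt_fix this

lemma comm_cancel_right {z x y : Q} (h1 : z * y = y * z)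
    (h2 : z * (x * y) = (x * y) * z) : z * x = x * z := by
  have hT := AutomorphicLoop.T_isAut z x y
  rw [Tt_fix h2, Tt_fix h1] at hT
  have : Tt z x = x := by
    apply (Loop.rmul_bij y).1
    exact hT.symm
  exact comm_of_Tt_fix this

end Aux

theorem stmt18 {Q₁ Q₂ : Type*} [AutomorphicLoop Q₁] [AutomorphicLoop Q₂]
    (φ : Q₁ ≃ Q₂)
    (hhalf : ∀ x y : Q₁, φ (x * y) = φ x * φ y ∨ φ (x * y) = φ y * φ x)
    (hspecial : ∀ u v : Q₂, φ.symm (u * v) = φ.symm u * φ.symm v ∨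
      φ.symm (u * v) = φ.symm v * φ.symm u)
    (hnoGG : ¬ ∃ x y z : Q₁,
      (φ (x * y) = φ x * φ y ∧ φ x * φ y ≠ φ y * φ x) ∧
      (φ (x * z) = φ z * φ x ∧ φ x * φ z ≠ φ z * φ x)) :
    (∀ a b : Q₁, φ (a * b) = φ a * φ b) ∨
    (∀ a b : Q₁, φ (a * b) = φ b * φ a) := by
  by_contra hcon
  push_neg at hcon
  obtain ⟨h1, h2⟩ := hcon
  obtain ⟨a, b, hab0⟩ := h1
  obtain ⟨c, d, hcd0⟩ := h2
  have hab : φ (a * b) = φ b * φ a := (hhalf a b).resolve_left hab0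
  have hne1 : φ a * φ b ≠ φ b * φ a := fun h => hab0 (hab.trans h.symm)
  have hcd : φ (c * d) = φ c * φ d := (hhalf c d).resolve_right hcd0
  have hne2 : φ c * φ d ≠ φ d * φ c := fun h => hcd0 (hcd.trans h)
  -- speciality transfer lemmas
  have S1 : ∀ x y : Q₁, φ (x * y) = φ x * φ y → φ x * φ y ≠ φ y * φ x →
      φ (y * x) = φ y * φ x := by
    intro x y hs hne
    rcases hspecial (φ y) (φ x) with h | h
    · simp only [Equiv.symm_apply_apply] at h
      have := (Equiv.symm_apply_eq φ).mp h
      exact this.symm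
    · simp only [Equiv.symm_apply_apply] at h
      have := (Equiv.symm_apply_eq φ).mp h
      exact absurd (hs.symm.trans this.symm) hne
  have S2 : ∀ x y : Q₁, φ (x * y) = φ y * φ x → φ x * φ y ≠ φ y * φ x →
      φ (y * x) = φ x * φ y := by
    intro x y hs hne
    rcases hspecial (φ x) (φ y) with h | h
    · simp only [Equiv.symm_apply_apply] at h
      have := (Equiv.symm_apply_eq φ).mp h
      exact absurd (hs.symm.trans this.symm).symm hne
    · simp only [Equiv.symm_apply_apply] at h
      have := (Equiv.symm_apply_eq φ).mp h
      exact this.symm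
  have hdc : φ (d * c) = φ d * φ c := S1 c d hcd hne2
  have hba : φ (b * a) = φ a * φ b := S2 a b hab hne1
  -- no-GG specializations
  have noGGa : ∀ y, φ (a * y) = φ a * φ y → φ a * φ y ≠ φ y * φ a → False :=
    fun y hy hyne => hnoGG ⟨a, y, b, ⟨hy, hyne⟩, ⟨hab, hne1⟩⟩
  have noGGb : ∀ y, φ (b * y) = φ b * φ y → φ b * φ y ≠ φ y * φ b → False :=
    fun y hy hyne => hnoGG ⟨b, y, a, ⟨hy, hyne⟩, ⟨hba, hne1.symm⟩⟩
  have noGGc : ∀ z, φ (c * z) = φ z * φ c → φ c * φ z ≠ φ z * φ c → False :=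
    fun z hz hzne => hnoGG ⟨c, d, z, ⟨hcd, hne2⟩, ⟨hz, hzne⟩⟩
  have noGGd : ∀ z, φ (d * z) = φ z * φ d → φ d * φ z ≠ φ z * φ d → False :=
    fun z hz hzne => hnoGG ⟨d, c, z, ⟨hdc, hne2.symm⟩, ⟨hz, hzne⟩⟩
  -- cross commutation
  have cross : ∀ g p : Q₁,
      (∀ z, φ (g * z) = φ z * φ g → φ g * φ z ≠ φ z * φ g → False) →
      (∀ y, φ (p * y) = φ p * φ y → φ p * φ y ≠ φ y * φ p → False) →
      φ g * φ p = φ p * φ g := by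
    intro g p hg hp
    by_contra hn
    rcases hhalf g p with h | h
    · exact hp g (S1 g p h hn) fun e => hn e.symm
    · exact hg p h hn
  have hca : φ c * φ a = φ a * φ c := cross c a noGGc noGGa
  have hcb : φ c * φ b = φ b * φ c := cross c b noGGc noGGb
  have hda : φ d * φ a = φ a * φ d := cross d a noGGd noGGa
  have hdb : φ d * φ b = φ b * φ d := cross d b noGGd noGGb
  -- the element m = a * c
  have hm : φ (a * c) = φ a * φ c := by
    rcases hhalf a c with h | h
    · exact h
    · exact h.trans hca
  have hmd_ne : φ (a * c) * φ d ≠ φ d * φ (a * c) := by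
    intro h
    rw [hm] at h
    exact hne2.symm (comm_cancel_left hda h.symm)
  have hmb_ne : φ (a * c) * φ b ≠ φ b * φ (a * c) := by
    intro h
    rw [hm] at h
    exact hne1.symm (comm_cancel_right hcb.symm h.symm)
  -- pair (d, m)
  have hdm : φ (d * (a * c)) = φ d * φ (a * c) := by
    rcases hhalf d (a * c) with h | h
    · exact h
    · exact absurd h (fun h => noGGd (a * c) h hmd_ne.symm)
  have hmd : φ ((a * c) * d) = φ (a * c) * φ d := S1 d (a * c) hdm hmd_ne.symm
  -- pair (b, m)
  have hbm : φ (b * (a * c)) = φ (a * c) * φ b := by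
    rcases hhalf b (a * c) with h | h
    · exact absurd h (fun h => noGGb (a * c) h hmb_ne.symm)
    · exact h
  have hmb : φ ((a * c) * b) = φ b * φ (a * c) := S2 b (a * c) hbm hmb_ne.symm
  exact hnoGG ⟨a * c, d, b, ⟨hmd, hmd_ne⟩, ⟨hmb, hmb_ne⟩⟩
end
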